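/- Additivity for independent subsystems: Let A and B be disjoint systems of discrete random variables that are independent (the joint variable of A is independent of the joint variable of B), and let C = A ∪ B. For nested partition sequences P^A of A, P^B of B, and any nested partition sequence P^C of C whose partitions restrict to those of P^A on A and P^B on B, we have C_C^{P^C}(n) = C_A^{P^A}(n) + C_B^{P^B}(n) for all n. -/
import Mathlib


open scoped BigOperators Classical

namespace Ashby

/-- A probability mass function on a finite sample space. -/
def IsProb {Ω : Type*} [Fintype Ω] (μ : Ω → ℝ) : Prop :=
  (∀ ω, 0 ≤ μ ω) ∧ ∑ ω, μ ω = 1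

/-- Probability that the random variable `X` takes the value `a`. -/
noncomputable def prob {Ω α : Type*} [Fintype Ω] (μ : Ω → ℝ) (X : Ω → α) (a : α) : ℝ :=
  ∑ ω, if X ω = a then μ ω else 0

/-- Shannon entropy of a discrete random variable. -/
noncomputable def H {Ω α : Type*} [Fintype Ω] [Fintype α] (μ : Ω → ℝ) (X : Ω → α) : ℝ :=
  ∑ a, Real.negMulLog (prob μ X a)

/-- Conditional entropy `H(Y|X)`. -/
noncomputable def condH {Ω α β : Type*} [Fintype Ω] [Fintype α] [Fintype β]
    (μ : Ω → ℝ) (Y : Ω → β) (X : Ω → α) : ℝ :=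
  H μ (fun ω => (X ω, Y ω)) - H μ X

/-- Mutual information `I(X;Y)`. -/
noncomputable def mutualInfo {Ω α β : Type*} [Fintype Ω] [Fintype α] [Fintype β]
    (μ : Ω → ℝ) (X : Ω → α) (Y : Ω → β) : ℝ :=
  H μ X + H μ Y - H μ (fun ω => (X ω, Y ω))

/-- Conditional mutual information `I(X;Y|Z)`. -/
noncomputable def condMutualInfo {Ω α β γ : Type*} [Fintype Ω] [Fintype α] [Fintype β] [Fintype γ]
    (μ : Ω → ℝ) (X : Ω → α) (Y : Ω → β) (Z : Ω → γ) : ℝ :=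
  condH μ X Z + condH μ Y Z - condH μ (fun ω => (X ω, Y ω)) Z

/-- Entropy of the joint random variable formed by the components of the system `x`
whose indices lie in the part `S`. -/
noncomputable def Hset {Ω α ι : Type*} [Fintype Ω] [Fintype α] [DecidableEq ι]
    (μ : Ω → ℝ) (x : ι → Ω → α) (S : Finset ι) : ℝ :=
  H μ (fun ω => (fun i : S => x i.1 ω))

/-- A nested partition sequence of the (index set of a) system: for each `n ≥ 1`,
`part n` is a partition of the index set, `part n` refines `part m` whenever `n ≥ m ≥ 1`,
and this refinement is strict whenever `|X| ≥ n > m ≥ 1`. -/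
structure NPS (ι : Type*) [Fintype ι] [DecidableEq ι] where
  part : ℕ → Finset (Finset ι)
  partition : ∀ n, 1 ≤ n → (∅ ∉ part n ∧ ∀ i : ι, ∃! χ, χ ∈ part n ∧ i ∈ χ)
  refines : ∀ m n, 1 ≤ m → m ≤ n → ∀ χ ∈ part n, ∃ χ' ∈ part m, χ ⊆ χ'
  strict : ∀ m n, 1 ≤ m → m < n → n ≤ Fintype.card ι → part n ≠ part m

/-- `S̃_X^P(n) = Σ_{χ ∈ P_n} H(χ)`, with `S̃_X^P(0) = 0`. -/
noncomputable def Stilde {Ω α ι : Type*} [Fintype Ω] [Fintype α] [Fintype ι] [DecidableEq ι]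
    (μ : Ω → ℝ) (x : ι → Ω → α) (P : NPS ι) (n : ℕ) : ℝ :=
  if n = 0 then 0 else ∑ χ ∈ P.part n, Hset μ x χ

/-- The complexity profile `C_X^P(n) = S̃_X^P(n) − S̃_X^P(n−1)`. -/
noncomputable def C {Ω α ι : Type*} [Fintype Ω] [Fintype α] [Fintype ι] [DecidableEq ι]
    (μ : Ω → ℝ) (x : ι → Ω → α) (P : NPS ι) (n : ℕ) : ℝ :=
  Stilde μ x P n - Stilde μ x P (n - 1)


section AuxLemmas

variable {Ω α β γ δ : Type*} [Fintype Ω] {μ : Ω → ℝ}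

lemma prob_nonneg (hμ : ∀ ω, 0 ≤ μ ω) (X : Ω → α) (a : α) : 0 ≤ prob μ X a :=
  Finset.sum_nonneg fun ω _ => by split <;> simp [hμ ω]

lemma sum_prob [Fintype α] (X : Ω → α) : ∑ a, prob μ X a = ∑ ω, μ ω := by
  unfold prob
  rw [Finset.sum_comm]
  refine Finset.sum_congr rfl fun ω _ => ?_
  rw [Finset.sum_eq_single (X ω)]
  · simp
  · intro a _ ha; exact if_neg (fun h => ha h.symm)
  · simp

private lemma ite_sum (c : Prop) [Decidable c] (g : Ω → ℝ) :
    (if c then ∑ ω, g ω else 0) = ∑ ω, if c then g ω else 0 := by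
  split <;> simp

lemma prob_comp [Fintype α] (f : α → β) (X : Ω → α) (b : β) :
    prob μ (fun ω => f (X ω)) b = ∑ a, if f a = b then prob μ X a else 0 := by
  unfold prob
  simp only [ite_sum]
  rw [Finset.sum_comm]
  refine Finset.sum_congr rfl fun ω _ => ?_
  rw [Finset.sum_eq_single (X ω)]
  · simp
  · intro a _ ha
    split
    · exact if_neg (fun h => ha h.symm)
    · rfl
  · simp

lemma prob_comp_apply (f : α → β) (hf : Function.Injective f) (X : Ω → α) (a : α) :
    prob μ (fun ω => f (X ω)) (f a) = prob μ X a := by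
  unfold prob
  refine Finset.sum_congr rfl fun ω _ => ?_
  simp [hf.eq_iff]

lemma prob_comp_of_not_mem (f : α → β) (X : Ω → α) {b : β} (hb : b ∉ Set.range f) :
    prob μ (fun ω => f (X ω)) b = 0 := by
  unfold prob
  exact Finset.sum_eq_zero fun ω _ => if_neg fun h => hb ⟨X ω, h⟩

lemma H_comp_injective [Fintype α] [Fintype β] (f : α → β) (hf : Function.Injective f)
    (X : Ω → α) : H μ (fun ω => f (X ω)) = H μ X := by
  unfold H
  calc ∑ b, Real.negMulLog (prob μ (fun ω => f (X ω)) b)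
      = ∑ b ∈ Finset.univ.image f, Real.negMulLog (prob μ (fun ω => f (X ω)) b) := by
        refine (Finset.sum_subset (Finset.subset_univ _) fun b _ hb => ?_).symm
        rw [prob_comp_of_not_mem f X (by simpa using hb)]
        simp
    _ = ∑ a, Real.negMulLog (prob μ (fun ω => f (X ω)) (f a)) :=
        Finset.sum_image fun a _ b _ h => hf h
    _ = ∑ a, Real.negMulLog (prob μ X a) := by
        refine Finset.sum_congr rfl fun a _ => ?_
        rw [prob_comp_apply f hf]

lemma prob_fst [Fintype β] (X : Ω → α) (Y : Ω → β) (a : α) :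
    ∑ b, prob μ (fun ω => (X ω, Y ω)) (a, b) = prob μ X a := by
  unfold prob
  rw [Finset.sum_comm]
  refine Finset.sum_congr rfl fun ω _ => ?_
  rw [Finset.sum_eq_single (Y ω)]
  · by_cases h : X ω = a <;> simp [h, Prod.ext_iff]
  · intro b _ hb
    exact if_neg (by simp [Prod.ext_iff]; tauto)
  · simp

lemma prob_snd [Fintype α] (X : Ω → α) (Y : Ω → β) (b : β) :
    ∑ a, prob μ (fun ω => (X ω, Y ω)) (a, b) = prob μ Y b := by
  unfold prob
  rw [Finset.sum_comm]
  refine Finset.sum_congr rfl fun ω _ => ?_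
  rw [Finset.sum_eq_single (X ω)]
  · by_cases h : Y ω = b <;> simp [h, Prod.ext_iff]
  · intro a _ ha
    exact if_neg (by simp [Prod.ext_iff]; tauto)
  · simp

/-- Gibbs equality case: if entropies are additive, the joint distribution factorizes. -/
lemma gibbs_factorize [Fintype α] [Fintype β] (p : α × β → ℝ) (pX : α → ℝ) (pY : β → ℝ)
    (hp : ∀ z, 0 ≤ p z)
    (hX : ∀ a, pX a = ∑ b, p (a, b)) (hY : ∀ b, pY b = ∑ a, p (a, b))
    (hsum : ∑ a, pX a = 1)
    (hI : ∑ z, Real.negMulLog (p z) = ∑ a, Real.negMulLog (pX a) + ∑ b, Real.negMulLog (pY b)) :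
    ∀ z, p z = pX z.1 * pY z.2 := by
  classical
  set q : α × β → ℝ := fun z => pX z.1 * pY z.2 with hq
  have hpXnn : ∀ a, 0 ≤ pX a := fun a => (hX a) ▸ Finset.sum_nonneg fun b _ => hp _
  have hpYnn : ∀ b, 0 ≤ pY b := fun b => (hY b) ▸ Finset.sum_nonneg fun a _ => hp _
  have hqnn : ∀ z, 0 ≤ q z := fun z => mul_nonneg (hpXnn _) (hpYnn _)
  have hsump : ∑ z, p z = 1 := by
    rw [Fintype.sum_prod_type]
    simpa [← hX] using hsum
  have hsumY : ∑ b, pY b = 1 := by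
    rw [show ∑ b, pY b = ∑ z : α × β, p z by
      rw [Fintype.sum_prod_type, Finset.sum_comm]; simp [← hY]]
    exact hsump
  have hsumq : ∑ z, q z = 1 := by
    rw [Fintype.sum_prod_type]
    simp only [hq, ← Finset.mul_sum, hsumY, mul_one, hsum]
  have hposX : ∀ z, 0 < p z → 0 < pX z.1 := fun z hz =>
    lt_of_lt_of_le hz (by rw [hX]; exact Finset.single_le_sum (fun b _ => hp (z.1, b)) (Finset.mem_univ z.2))
  have hposY : ∀ z, 0 < p z → 0 < pY z.2 := fun z hz =>
    lt_of_lt_of_le hz (by rw [hY]; exact Finset.single_le_sum (fun a _ => hp (a, z.2)) (Finset.mem_univ z.1))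
  have hkey : ∑ z, p z * Real.log (p z) = ∑ z, p z * Real.log (q z) := by
    have e1 : ∑ z, p z * Real.log (q z)
        = ∑ z, p z * Real.log (pX z.1) + ∑ z, p z * Real.log (pY z.2) := by
      rw [← Finset.sum_add_distrib]
      refine Finset.sum_congr rfl fun z _ => ?_
      rcases eq_or_lt_of_le (hp z) with h | h
      · simp [← h]
      · rw [hq]; rw [Real.log_mul (ne_of_gt (hposX z h)) (ne_of_gt (hposY z h))]; ring
    have e2 : ∑ z, p z * Real.log (pX z.1) = ∑ a, pX a * Real.log (pX a) := by
      rw [Fintype.sum_prod_type]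
      refine Finset.sum_congr rfl fun a _ => ?_
      dsimp only
      rw [← Finset.sum_mul, ← hX]
    have e3 : ∑ z, p z * Real.log (pY z.2) = ∑ b, pY b * Real.log (pY b) := by
      rw [Fintype.sum_prod_type, Finset.sum_comm]
      refine Finset.sum_congr rfl fun b _ => ?_
      dsimp only
      rw [← Finset.sum_mul, ← hY]
    have := hI
    simp only [Real.negMulLog, neg_mul, Finset.sum_neg_distrib] at this
    rw [e1, e2, e3]
    linarith
  set T := Finset.univ.filter (fun z => 0 < p z) with hT
  have hzero : ∀ z ∈ Finset.univ, z ∉ T → p z * (Real.log (p z) - Real.log (q z)) = 0 := by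
    intro z _ hz
    have : p z = 0 := le_antisymm (by simpa [hT] using hz) (hp z)
    simp [this]
  have hDsum : ∑ z ∈ T, p z * (Real.log (p z) - Real.log (q z)) = 0 := by
    rw [Finset.sum_subset (Finset.subset_univ T) hzero]
    simp only [mul_sub]
    rw [Finset.sum_sub_distrib, hkey, sub_self]
  have hpT : ∑ z ∈ T, p z = 1 := by
    rw [Finset.sum_subset (Finset.subset_univ T) (fun z _ hz =>
      le_antisymm (by simpa [hT] using hz) (hp z))]
    exact hsump
  have hterm : ∀ z ∈ T, p z - q z ≤ p z * (Real.log (p z) - Real.log (q z)) := by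
    intro z hz
    have hpz : 0 < p z := by simpa [hT] using hz
    have hqz : 0 < q z := mul_pos (hposX z hpz) (hposY z hpz)
    have hlog : Real.log (q z / p z) ≤ q z / p z - 1 :=
      Real.log_le_sub_one_of_pos (div_pos hqz hpz)
    rw [Real.log_div (ne_of_gt hqz) (ne_of_gt hpz)] at hlog
    have := mul_le_mul_of_nonneg_left hlog (le_of_lt hpz)
    have h2 : p z * (q z / p z - 1) = q z - p z := by field_simp
    nlinarith
  have hqT : ∑ z ∈ T, q z ≤ 1 := by
    rw [← hsumq]
    exact Finset.sum_le_sum_of_subset_of_nonneg (Finset.subset_univ T) fun z _ _ => hqnn z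
  have hsum_eq : ∑ z ∈ T, (p z - q z) = 0 := by
    have h1 : ∑ z ∈ T, (p z - q z) ≤ 0 := by
      calc ∑ z ∈ T, (p z - q z) ≤ ∑ z ∈ T, p z * (Real.log (p z) - Real.log (q z)) :=
            Finset.sum_le_sum hterm
        _ = 0 := hDsum
    have h2 : 0 ≤ ∑ z ∈ T, (p z - q z) := by
      rw [Finset.sum_sub_distrib, hpT]
      linarith
    linarith
  have heq : ∀ z ∈ T, p z - q z = p z * (Real.log (p z) - Real.log (q z)) := by
    rw [← Finset.sum_eq_sum_iff_of_le hterm]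
    rw [hsum_eq, hDsum]
  have honT : ∀ z ∈ T, p z = q z := by
    intro z hz
    have hpz : 0 < p z := by simpa [hT] using hz
    have hqz : 0 < q z := mul_pos (hposX z hpz) (hposY z hpz)
    by_contra hne
    have hratio : q z / p z ≠ 1 := by
      intro h
      exact hne ((div_eq_one_iff_eq (ne_of_gt hpz)).mp h).symm
    have hlog : Real.log (q z / p z) < q z / p z - 1 :=
      Real.log_lt_sub_one_of_pos (div_pos hqz hpz) hratio
    rw [Real.log_div (ne_of_gt hqz) (ne_of_gt hpz)] at hlog
    have := mul_lt_mul_of_pos_left hlog hpz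
    have h2 : p z * (q z / p z - 1) = q z - p z := by field_simp
    have := heq z hz
    nlinarith
  have hqTsum : ∑ z ∈ T, q z = 1 := by
    have : ∑ z ∈ T, p z = ∑ z ∈ T, q z := by
      have := hsum_eq
      rw [Finset.sum_sub_distrib] at this
      linarith
    rw [← this, hpT]
  intro z
  by_cases hz : z ∈ T
  · exact honT z hz
  · have hpz : p z = 0 := le_antisymm (by simpa [hT] using hz) (hp z)
    have : ∑ z ∈ Finset.univ \ T, q z = 0 := by
      have := Finset.sum_sdiff (Finset.subset_univ T) (f := q)
      rw [hsumq] at this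
      linarith [hqTsum]
    have hqz : q z = 0 :=
      (Finset.sum_eq_zero_iff_of_nonneg fun w _ => hqnn w).mp this z
        (by simp [Finset.mem_sdiff, hz])
    rw [hpz, ← hqz]

/-- Entropy of an independent pair is additive. -/
lemma H_pair_of_indep [Fintype α] [Fintype β] (hμ : ∑ ω, μ ω = 1)
    (U : Ω → α) (V : Ω → β)
    (hfac : ∀ u v, prob μ (fun ω => (U ω, V ω)) (u, v) = prob μ U u * prob μ V v) :
    H μ (fun ω => (U ω, V ω)) = H μ U + H μ V := by
  unfold H
  rw [Fintype.sum_prod_type]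
  have key : ∀ u : α, ∑ v, Real.negMulLog (prob μ (fun ω => (U ω, V ω)) (u, v))
      = Real.negMulLog (prob μ U u) + prob μ U u * (∑ v, Real.negMulLog (prob μ V v)) := by
    intro u
    have step : ∀ v : β, Real.negMulLog (prob μ (fun ω => (U ω, V ω)) (u, v))
        = prob μ V v * Real.negMulLog (prob μ U u) + prob μ U u * Real.negMulLog (prob μ V v) := by
      intro v
      rw [hfac u v, Real.negMulLog_mul]
    rw [Finset.sum_congr rfl fun v _ => step v, Finset.sum_add_distrib, ← Finset.sum_mul,
      ← Finset.mul_sum, sum_prob V, hμ, one_mul]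
  rw [Finset.sum_congr rfl fun u _ => key u, Finset.sum_add_distrib, ← Finset.sum_mul,
    sum_prob U, hμ, one_mul]

/-- Functions of independent variables are independent. -/
lemma comp_indep [Fintype α] [Fintype β] (X : Ω → α) (Y : Ω → β)
    (hfac : ∀ a b, prob μ (fun ω => (X ω, Y ω)) (a, b) = prob μ X a * prob μ Y b)
    (f : α → γ) (g : β → δ) (c : γ) (d : δ) :
    prob μ (fun ω => (f (X ω), g (Y ω))) (c, d)
      = prob μ (fun ω => f (X ω)) c * prob μ (fun ω => g (Y ω)) d := by
  have h1 : prob μ (fun ω => (f (X ω), g (Y ω))) (c, d)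
      = ∑ z : α × β, if (f z.1, g z.2) = (c, d) then prob μ (fun ω => (X ω, Y ω)) z else 0 := by
    have := prob_comp (μ := μ) (fun z : α × β => (f z.1, g z.2)) (fun ω => (X ω, Y ω)) (c, d)
    convert this using 2
    split_ifs <;> rfl
  rw [h1]
  rw [Fintype.sum_prod_type]
  have key : ∀ a b, (if (f a, g b) = (c, d) then prob μ (fun ω => (X ω, Y ω)) (a, b) else 0)
      = (if f a = c then prob μ X a else 0) * (if g b = d then prob μ Y b else 0) := by
    intro a b
    by_cases h1 : f a = c <;> by_cases h2 : g b = d <;>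
      simp [h1, h2, Prod.ext_iff, hfac a b]
  simp_rw [key]
  rw [← Finset.sum_mul_sum]
  rw [prob_comp (μ := μ) f X c, prob_comp (μ := μ) g Y d]

/-- Entropy of a variable with subsingleton codomain vanishes. -/
lemma H_subsingleton [Fintype α] [Subsingleton α] [Nonempty α] (hμ : ∑ ω, μ ω = 1)
    (X : Ω → α) : H μ X = 0 := by
  unfold H
  refine Finset.sum_eq_zero fun a _ => ?_
  have : prob μ X a = 1 := by
    unfold prob
    rw [Finset.sum_congr rfl fun ω _ => if_pos (Subsingleton.elim _ _), hμ]
  rw [this, Real.negMulLog_one]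

lemma Hset_empty {ι : Type*} [Fintype α] [DecidableEq ι]
    (hμ2 : ∑ ω, μ ω = 1) (y : ι → Ω → α) : Hset μ y (∅ : Finset ι) = 0 := by
  haveI : IsEmpty (↥(∅ : Finset ι)) := by
    constructor; rintro ⟨i, hi⟩; simp at hi
  haveI : Unique (↥(∅ : Finset ι) → α) := Pi.uniqueOfIsEmpty _
  exact H_subsingleton hμ2 _

/-- The gluing map identifying a tuple over `χ` with the pair of its restrictions. -/
noncomputable def glue {ι α : Type*} [DecidableEq ι] (SA SB χ : Finset ι)
    (hB : ∀ i ∈ χ, i ∉ SA → i ∈ SB)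
    (uv : (↥(χ.subtype (· ∈ SA)) → α) × (↥(χ.subtype (· ∈ SB)) → α)) : ↥χ → α :=
  fun i => if h : (i : ι) ∈ SA then uv.1 ⟨⟨i.1, h⟩, Finset.mem_subtype.mpr i.2⟩
    else uv.2 ⟨⟨i.1, hB i.1 i.2 h⟩, Finset.mem_subtype.mpr i.2⟩

lemma glue_injective {ι : Type*} [DecidableEq ι] (SA SB χ : Finset ι)
    (hdisj : Disjoint SA SB) (hB : ∀ i ∈ χ, i ∉ SA → i ∈ SB) :
    Function.Injective (glue (α := α) SA SB χ hB) := by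
  intro u v h
  refine Prod.ext ?_ ?_
  · funext j
    have hjχ : (j.1 : ι) ∈ χ := Finset.mem_subtype.mp j.2
    have := congrFun h ⟨j.1.1, hjχ⟩
    unfold glue at this
    simp only [dif_pos j.1.2] at this
    exact this
  · funext j
    have hjχ : (j.1 : ι) ∈ χ := Finset.mem_subtype.mp j.2
    have hnA : (j.1 : ι) ∉ SA := Finset.disjoint_right.mp hdisj j.1.2
    have := congrFun h ⟨j.1.1, hjχ⟩
    unfold glue at this
    simp only [dif_neg hnA] at this
    exact this

/-- Entropy of a part splits across two independent subsystems. -/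
lemma Hset_split {ι : Type*} [Fintype α] [Fintype ι] [DecidableEq ι]
    (hμ : IsProb μ) (SA SB : Finset ι) (hdisj : Disjoint SA SB)
    (hunion : SA ∪ SB = Finset.univ) (x : ι → Ω → α)
    (hfac : ∀ (a : ↥SA → α) (b : ↥SB → α),
      prob μ (fun ω => ((fun i : SA => x i.1 ω), (fun i : SB => x i.1 ω))) (a, b)
        = prob μ (fun ω => (fun i : SA => x i.1 ω)) a
          * prob μ (fun ω => (fun i : SB => x i.1 ω)) b)
    (χ : Finset ι) :
    Hset μ x χ = Hset μ (fun i : ↥SA => x i.1) (χ.subtype (· ∈ SA))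
      + Hset μ (fun i : ↥SB => x i.1) (χ.subtype (· ∈ SB)) := by
  have hB : ∀ i ∈ χ, i ∉ SA → i ∈ SB := by
    intro i _ hi
    have : i ∈ SA ∪ SB := hunion ▸ Finset.mem_univ i
    simpa [Finset.mem_union, hi] using this
  set XA : Ω → (↥SA → α) := fun ω => (fun i : SA => x i.1 ω) with hXA
  set XB : Ω → (↥SB → α) := fun ω => (fun i : SB => x i.1 ω) with hXB
  set rA : (↥SA → α) → (↥(χ.subtype (· ∈ SA)) → α) := fun u j => u j.1 with hrA
  set rB : (↥SB → α) → (↥(χ.subtype (· ∈ SB)) → α) := fun u j => u j.1 with hrB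
  have hfac2 : ∀ u v, prob μ (fun ω => (rA (XA ω), rB (XB ω))) (u, v)
      = prob μ (fun ω => rA (XA ω)) u * prob μ (fun ω => rB (XB ω)) v :=
    fun u v => comp_indep XA XB hfac rA rB u v
  have h0 : (fun ω => (fun i : ↥χ => x i.1 ω))
      = (fun ω => glue SA SB χ hB (rA (XA ω), rB (XB ω))) := by
    funext ω i
    unfold glue
    split <;> rfl
  calc Hset μ x χ
      = H μ (fun ω => glue SA SB χ hB (rA (XA ω), rB (XB ω))) := congrArg (H μ) h0
    _ = H μ (fun ω => (rA (XA ω), rB (XB ω))) :=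
        H_comp_injective _ (glue_injective SA SB χ hdisj hB) _
    _ = H μ (fun ω => rA (XA ω)) + H μ (fun ω => rB (XB ω)) :=
        H_pair_of_indep hμ.2 _ _ hfac2
    _ = Hset μ (fun i : ↥SA => x i.1) (χ.subtype (· ∈ SA))
          + Hset μ (fun i : ↥SB => x i.1) (χ.subtype (· ∈ SB)) := rfl

/-- Summing `Hset` of restrictions over a partition equals summing over the restricted
partition. -/
lemma sum_Hset_restrict {ι : Type*} [Fintype α] [DecidableEq ι]
    (hμ2 : ∑ ω, μ ω = 1) (S : Finset ι) (y : ↥S → Ω → α)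
    (parts : Finset (Finset ι))
    (huniq : ∀ χ1 ∈ parts, ∀ χ2 ∈ parts, ∀ i : ι, i ∈ χ1 → i ∈ χ2 → χ1 = χ2) :
    ∑ χ ∈ parts, Hset μ y (χ.subtype (· ∈ S))
      = ∑ χ' ∈ (parts.image fun χ => χ.subtype (· ∈ S)) \ {∅}, Hset μ y χ' := by
  classical
  set F := parts.filter (fun χ => χ.subtype (· ∈ S) ≠ ∅) with hF
  have h1 : ∑ χ ∈ parts, Hset μ y (χ.subtype (· ∈ S))
      = ∑ χ ∈ F, Hset μ y (χ.subtype (· ∈ S)) := by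
    refine (Finset.sum_subset (Finset.filter_subset _ _) ?_).symm
    intro χ hχ hχF
    have hχe : χ.subtype (· ∈ S) = ∅ := by
      by_contra hne; exact hχF (Finset.mem_filter.2 ⟨hχ, hne⟩)
    rw [hχe]
    exact Hset_empty hμ2 y
  have himage : F.image (fun χ => χ.subtype (· ∈ S))
      = (parts.image fun χ => χ.subtype (· ∈ S)) \ {∅} := by
    ext χ'
    simp only [Finset.mem_image, Finset.mem_sdiff, Finset.mem_filter, Finset.mem_singleton, hF]
    constructor
    · rintro ⟨χ, ⟨hχ, hne⟩, rfl⟩; exact ⟨⟨χ, hχ, rfl⟩, hne⟩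
    · rintro ⟨⟨χ, hχ, rfl⟩, hne⟩; exact ⟨χ, ⟨hχ, hne⟩, rfl⟩
  rw [h1, ← himage]
  refine (Finset.sum_image ?_).symm
  intro χ1 h1' χ2 h2' heq
  have hne := (Finset.mem_filter.1 h1').2
  obtain ⟨j, hj⟩ := Finset.nonempty_iff_ne_empty.2 hne
  have hj2 : j ∈ χ2.subtype (· ∈ S) := heq ▸ hj
  exact huniq χ1 (Finset.mem_filter.1 h1').1 χ2 (Finset.mem_filter.1 h2').1 j.1
    (Finset.mem_subtype.mp hj) (Finset.mem_subtype.mp hj2)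

end AuxLemmas

/-- Additivity for independent subsystems: if `C = A ∪ B` with `A`, `B` disjoint and
independent, and the nested partition sequence of `C` restricts to those of `A` and `B`,
then the complexity profiles add: `C_C(n) = C_A(n) + C_B(n)`. -/
theorem additivity_independent {Ω α ι : Type*} [Fintype Ω] [Fintype α]
    [Fintype ι] [DecidableEq ι]
    (μ : Ω → ℝ) (hμ : IsProb μ)
    (SA SB : Finset ι) (hdisj : Disjoint SA SB) (hunion : SA ∪ SB = Finset.univ)
    (x : ι → Ω → α)
    (hindep : mutualInfo μ (fun ω => (fun i : SA => x i.1 ω))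
        (fun ω => (fun i : SB => x i.1 ω)) = 0)
    (PC : NPS ι) (PA : NPS ↥SA) (PB : NPS ↥SB)
    (hresA : ∀ n, 1 ≤ n →
      ((PC.part n).image (fun χ => χ.subtype (· ∈ SA))) \ {∅} = PA.part n)
    (hresB : ∀ n, 1 ≤ n →
      ((PC.part n).image (fun χ => χ.subtype (· ∈ SB))) \ {∅} = PB.part n) :
    ∀ n, 1 ≤ n →
      C μ x PC n = C μ (fun i : ↥SA => x i.1) PA n + C μ (fun i : ↥SB => x i.1) PB n := by
  suffices key : ∀ m, Stilde μ x PC m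
      = Stilde μ (fun i : ↥SA => x i.1) PA m + Stilde μ (fun i : ↥SB => x i.1) PB m by
    intro n _
    unfold C
    rw [key n, key (n - 1)]
    ring
  -- global factorization from independence
  have hfac : ∀ (a : ↥SA → α) (b : ↥SB → α),
      prob μ (fun ω => ((fun i : SA => x i.1 ω), (fun i : SB => x i.1 ω))) (a, b)
        = prob μ (fun ω => (fun i : SA => x i.1 ω)) a
          * prob μ (fun ω => (fun i : SB => x i.1 ω)) b := by
    intro a b
    refine gibbs_factorize
      (prob μ (fun ω => ((fun i : SA => x i.1 ω), (fun i : SB => x i.1 ω))))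
      (prob μ (fun ω => (fun i : SA => x i.1 ω)))
      (prob μ (fun ω => (fun i : SB => x i.1 ω)))
      (prob_nonneg hμ.1 _) (fun a' => (prob_fst _ _ a').symm)
      (fun b' => (prob_snd _ _ b').symm)
      (by rw [sum_prob]; exact hμ.2) ?_ (a, b)
    have h := hindep
    unfold mutualInfo H at h
    linarith
  intro m
  rcases Nat.eq_zero_or_pos m with hm | hm
  · simp [hm, Stilde]
  have hm' : m ≠ 0 := Nat.pos_iff_ne_zero.mp hm
  unfold Stilde
  rw [if_neg hm', if_neg hm', if_neg hm']
  have huniq : ∀ χ1 ∈ PC.part m, ∀ χ2 ∈ PC.part m, ∀ i : ι, i ∈ χ1 → i ∈ χ2 → χ1 = χ2 := by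
    intro χ1 hχ1 χ2 hχ2 i hi1 hi2
    obtain ⟨χ, -, hu⟩ := (PC.partition m hm).2 i
    rw [hu χ1 ⟨hχ1, hi1⟩, hu χ2 ⟨hχ2, hi2⟩]
  rw [Finset.sum_congr rfl fun χ _ =>
    Hset_split hμ SA SB hdisj hunion x hfac χ]
  rw [Finset.sum_add_distrib]
  rw [sum_Hset_restrict hμ.2 SA (fun i : ↥SA => x i.1) (PC.part m) huniq,
    sum_Hset_restrict hμ.2 SB (fun i : ↥SB => x i.1) (PC.part m) huniq,
    hresA m hm, hresB m hm]
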